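/- arXiv:2208.13718 — 3 statements merged into one kernel-verified Lean document; each statement's English description precedes it below -/
import Mathlib

section
/- With a₃ = arccos(-1/4) and a₅ = arccos((3·cos(2π/5)+1)/2), we have tan(a₅/2)·tan(a₃/2) ≠ 1/3. -/
open Real

lemma sqrt5_lt : Real.sqrt 5 < 3 := by
  have := Real.sq_sqrt (by norm_num : (5:ℝ) ≥ 0 ).le
  nlinarith [Real.sqrt_nonneg 5]

lemma tan_half_arccos {x : ℝ} (h1 : -1 ≤ x) (h2 : x ≤ 1) :
    Real.tan (Real.arccos x / 2) = Real.sqrt ((1 - x) / 2) / Real.sqrt ((1 + x) / 2) := by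
  rw [Real.tan_eq_sin_div_cos,
    Real.sin_half_eq_sqrt (Real.arccos_nonneg x) (by linarith [Real.arccos_le_pi x, Real.pi_pos]),
    Real.cos_half (by linarith [Real.arccos_nonneg x, Real.pi_pos]) (Real.arccos_le_pi x),
    Real.cos_arccos h1 h2]

lemma cos_two_pi_div_five : Real.cos (2 * Real.pi / 5) = (Real.sqrt 5 - 1) / 4 := by
  have h : (2 : ℝ) * Real.pi / 5 = 2 * (Real.pi / 5) := by ring
  rw [h, Real.cos_two_mul, Real.cos_pi_div_five]
  have := Real.sq_sqrt (by norm_num : (0:ℝ) ≤ 5)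
  nlinarith [Real.sqrt_nonneg 5]

theorem stmt_2 :
    Real.tan (Real.arccos ((3 * Real.cos (2 * Real.pi / 5) + 1) / 2) / 2) *
      Real.tan (Real.arccos (-1/4) / 2) ≠ 1/3 := by
  have hs : Real.sqrt 5 ^ 2 = 5 := Real.sq_sqrt (by norm_num)
  have hs0 : 0 ≤ Real.sqrt 5 := Real.sqrt_nonneg 5
  have hs3 : Real.sqrt 5 < 3 := sqrt5_lt
  have hx5 : (3 * Real.cos (2 * Real.pi / 5) + 1) / 2 = (3 * Real.sqrt 5 + 1) / 8 := by
    rw [cos_two_pi_div_five]; ring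
  rw [hx5, tan_half_arccos (by nlinarith) (by nlinarith),
    tan_half_arccos (by norm_num) (by norm_num)]
  have e5 : (1 - (3 * Real.sqrt 5 + 1) / 8) / 2 = (7 - 3 * Real.sqrt 5) / 16 := by ring
  have f5 : (1 + (3 * Real.sqrt 5 + 1) / 8) / 2 = (9 + 3 * Real.sqrt 5) / 16 := by ring
  have e3 : (1 - (-1/4 : ℝ)) / 2 = 5 / 8 := by norm_num
  have f3 : (1 + (-1/4 : ℝ)) / 2 = 3 / 8 := by norm_num
  rw [e5, f5, e3, f3]
  intro h
  have hu1 : (0:ℝ) ≤ (7 - 3 * Real.sqrt 5) / 16 := by nlinarith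
  have hu2 : (0:ℝ) ≤ (5:ℝ) / 8 := by norm_num
  have hA : Real.sqrt ((7 - 3 * Real.sqrt 5) / 16) / Real.sqrt ((9 + 3 * Real.sqrt 5) / 16) *
      (Real.sqrt (5 / 8) / Real.sqrt (3 / 8)) =
      Real.sqrt ((7 - 3 * Real.sqrt 5) / 16 * (5 / 8) / ((9 + 3 * Real.sqrt 5) / 16 * (3 / 8))) := by
    rw [div_mul_div_comm, ← Real.sqrt_mul hu1, ← Real.sqrt_mul (by nlinarith),
      Real.sqrt_div (by nlinarith)]
  rw [hA] at h
  have ht : (7 - 3 * Real.sqrt 5) / 16 * (5 / 8) / ((9 + 3 * Real.sqrt 5) / 16 * (3 / 8)) = (1/3:ℝ)^2 := by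
    have h2 := Real.sq_sqrt (show (0:ℝ) ≤ (7 - 3 * Real.sqrt 5) / 16 * (5 / 8) / ((9 + 3 * Real.sqrt 5) / 16 * (3 / 8)) by
      apply div_nonneg (by nlinarith); nlinarith)
    rw [h] at h2
    linarith [h2]
  have hden : (9 + 3 * Real.sqrt 5) ≠ 0 := by nlinarith
  field_simp at ht
  nlinarith [ht]
end

section
/- Let a₅ = arccos((3·cos(2π/5)+1)/2) and b = 2·arctan((1/3)/tan(a₅/2)). Then 0.776 < π - b < 0.777. -/
set_option maxHeartbeats 1000000

open Real

lemma aux_arctan_lt (w : ℝ) (hw : 0 < w) : Real.arctan w < w := by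
  have h0 : 0 < Real.arctan w := by
    have := Real.arctan_strictMono hw
    rwa [Real.arctan_zero] at this
  have := Real.lt_tan h0 (Real.arctan_lt_pi_div_two w)
  rwa [Real.tan_arctan] at this

lemma aux_le_arctan (w : ℝ) (hw : 0 < w) (hw1 : w < 1) :
    w / Real.sqrt (1 + w ^ 2) ≤ Real.arctan w := by
  rw [Real.arctan_eq_arcsin]
  set t := w / Real.sqrt (1 + w ^ 2) with ht
  have hs : 0 < Real.sqrt (1 + w ^ 2) := Real.sqrt_pos.mpr (by positivity)
  have hs1 : 1 < Real.sqrt (1 + w ^ 2) := by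
    rw [Real.lt_sqrt (by norm_num)]
    nlinarith
  have ht0 : 0 < t := by positivity
  have ht1 : t < 1 := by
    rw [ht, div_lt_one hs]
    linarith
  have hsin : Real.sin (Real.arcsin t) = t := Real.sin_arcsin (by linarith) ht1.le
  have hnn : 0 ≤ Real.arcsin t := Real.arcsin_nonneg.mpr ht0.le
  calc t = Real.sin (Real.arcsin t) := hsin.symm
  _ ≤ Real.arcsin t := Real.sin_le hnn

lemma aux_sqrt5_bounds : 2.2360679 < Real.sqrt 5 ∧ Real.sqrt 5 < 2.2360680 := by
  have hs5sq : Real.sqrt 5 ^ 2 = 5 := Real.sq_sqrt (by norm_num)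
  have hs5pos : 0 < Real.sqrt 5 := Real.sqrt_pos.mpr (by norm_num)
  constructor
  · nlinarith
  · nlinarith

lemma aux_u_bounds (s5 u : ℝ) (h1 : 2.2360679 < s5) (h2 : s5 < 2.2360680)
    (hu : 0 < u) (hsq : u ^ 2 = 27 - 12 * s5) : 0.40888 < u ∧ u < 0.408884 := by
  constructor
  · nlinarith
  · nlinarith

lemma aux_v_bounds (u : ℝ) (h1 : 0.40888 < u) (h2 : u < 0.408884) :
    0.98189 < 2 * u / (1 - u ^ 2) ∧ 2 * u / (1 - u ^ 2) < 0.98194 := by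
  have hden : (0:ℝ) < 1 - u ^ 2 := by nlinarith
  constructor
  · rw [lt_div_iff₀ hden]
    nlinarith
  · rw [div_lt_iff₀ hden]
    nlinarith

lemma aux_u_sq_lt1 (u : ℝ) (h1 : 0.40888 < u) (h2 : u < 0.408884) : u ^ 2 < 1 := by
  nlinarith

lemma aux_vw_lt1 (v w : ℝ) (h1 : 0.98189 < v) (h2 : v < 0.98194)
    (h3 : 0.00911 < w) (h4 : w < 0.00914) : v * w < 1 := by
  nlinarith

lemma aux_w_bounds (v : ℝ) (h1 : 0.98189 < v) (h2 : v < 0.98194) :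
    0.00911 < (1 - v) / (1 + v) ∧ (1 - v) / (1 + v) < 0.00914 := by
  have hden : (0:ℝ) < 1 + v := by linarith
  constructor
  · rw [lt_div_iff₀ hden]
    nlinarith
  · rw [div_lt_iff₀ hden]
    nlinarith

lemma aux_arctan_w_bounds (w : ℝ) (h1 : 0.00911 < w) (h2 : w < 0.00914) :
    0.0091 < Real.arctan w ∧ Real.arctan w < 0.00914 := by
  have hw : 0 < w := by linarith
  constructor
  · have hle := aux_le_arctan w hw (by linarith)
    have hsqpos : 0 < Real.sqrt (1 + w ^ 2) := Real.sqrt_pos.mpr (by positivity)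
    have hsq : Real.sqrt (1 + w ^ 2) < 1.0001 := by
      rw [Real.sqrt_lt' (by norm_num)]
      nlinarith
    have hx : (0.0091 : ℝ) < w / Real.sqrt (1 + w ^ 2) := by
      rw [lt_div_iff₀ hsqpos]
      nlinarith
    linarith
  · exact lt_of_lt_of_le (aux_arctan_lt w hw) h2.le

theorem stmt_5 :
    let a₅ := Real.arccos ((3 * Real.cos (2 * Real.pi / 5) + 1) / 2)
    let b := 2 * Real.arctan ((1/3) / Real.tan (a₅ / 2))
    0.776 < Real.pi - b ∧ Real.pi - b < 0.777 := by
  intro a₅ b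
  obtain ⟨hs5l, hs5u⟩ := aux_sqrt5_bounds
  have hs5sq : Real.sqrt 5 ^ 2 = 5 := Real.sq_sqrt (by norm_num)
  set s5 := Real.sqrt 5 with hs5def
  -- cos (2π/5) = (√5 - 1)/4
  have hcos25 : Real.cos (2 * Real.pi / 5) = (s5 - 1) / 4 := by
    have h : (2:ℝ) * Real.pi / 5 = 2 * (Real.pi / 5) := by ring
    rw [h, Real.cos_two_mul, Real.cos_pi_div_five]
    rw [← hs5def]
    linear_combination (1/8 : ℝ) * hs5sq
  set X : ℝ := (3 * s5 + 1) / 8 with hXdef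
  have hXval : (3 * Real.cos (2 * Real.pi / 5) + 1) / 2 = X := by rw [hcos25]; ring
  have hX0 : 0 < X := by rw [hXdef]; linarith
  have hX1 : X < 1 := by rw [hXdef]; linarith
  have ha : a₅ = Real.arccos X := by
    show Real.arccos _ = _
    rw [hXval]
  have hcosa : Real.cos a₅ = X := by
    rw [ha]; exact Real.cos_arccos (by linarith) hX1.le
  have ha0 : 0 ≤ a₅ := ha ▸ Real.arccos_nonneg X
  have haπ : a₅ ≤ Real.pi := ha ▸ Real.arccos_le_pi X
  -- half angle
  have hsinh : Real.sin (a₅ / 2) = Real.sqrt ((1 - X) / 2) := by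
    rw [Real.sin_half_eq_sqrt ha0 (by linarith [Real.pi_pos]), hcosa]
  have hcosh : Real.cos (a₅ / 2) = Real.sqrt ((1 + X) / 2) := by
    rw [Real.cos_half (by linarith [Real.pi_pos]) haπ, hcosa]
  have h1X : (0:ℝ) < (1 - X) / 2 := by linarith
  have h2X : (0:ℝ) < (1 + X) / 2 := by linarith
  set s := Real.tan (a₅ / 2) with hsdef
  have hs_eq : s = Real.sqrt ((1 - X) / 2) / Real.sqrt ((1 + X) / 2) := by
    rw [hsdef, Real.tan_eq_sin_div_cos, hsinh, hcosh]
  have hs_pos : 0 < s := by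
    rw [hs_eq]
    exact div_pos (Real.sqrt_pos.mpr h1X) (Real.sqrt_pos.mpr h2X)
  have hs_sq : s ^ 2 = (1 - X) / (1 + X) := by
    have h1 : (1:ℝ) + X ≠ 0 := by positivity
    rw [hs_eq, div_pow, Real.sq_sqrt h1X.le, Real.sq_sqrt h2X.le]
    field_simp
  set u : ℝ := 3 * s with hudef
  have hu_pos : 0 < u := by positivity
  have hu_sq : u ^ 2 = 27 - 12 * s5 := by
    have key : (1 - X) / (1 + X) = (27 - 12 * s5) / 9 := by
      rw [div_eq_div_iff (by linarith) (by norm_num)]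
      rw [hXdef]
      linear_combination (9/2 : ℝ) * hs5sq
    rw [hudef, mul_pow, hs_sq, key]
    ring
  obtain ⟨hu_l, hu_u⟩ := aux_u_bounds s5 u hs5l hs5u hu_pos hu_sq
  have hu_lt1 : u < 1 := by linarith
  -- rewrite b
  have hinv : (1/3 : ℝ) / s = u⁻¹ := by
    rw [hudef]
    field_simp
  have hb : b = 2 * Real.arctan u⁻¹ := by
    show 2 * Real.arctan ((1/3) / Real.tan (a₅ / 2)) = _
    rw [← hsdef, hinv]
  have hbval : Real.pi - b = 2 * Real.arctan u := by
    rw [hb, Real.arctan_inv_of_pos hu_pos]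
    ring
  -- θ := arctan u
  set θ := Real.arctan u with hθdef
  have hθ_pos : 0 < θ := by
    have := Real.arctan_strictMono hu_pos
    rwa [Real.arctan_zero] at this
  have hθ_lt : θ < Real.pi / 4 := by
    have := Real.arctan_strictMono hu_lt1
    rwa [Real.arctan_one] at this
  have hu2_lt1 : u ^ 2 < 1 := aux_u_sq_lt1 u hu_l hu_u
  obtain ⟨v, hvdef⟩ : ∃ v : ℝ, v = 2 * u / (1 - u ^ 2) := ⟨_, rfl⟩
  have h2θ : 2 * θ = Real.arctan v := by
    rw [hvdef, ← Real.tan_arctan u, ← Real.tan_two_mul, ← hθdef, Real.arctan_tan]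
    · linarith
    · linarith
  obtain ⟨hv_l, hv_u⟩ := aux_v_bounds u hu_l hu_u
  rw [← hvdef] at hv_l hv_u
  obtain ⟨w, hwdef⟩ : ∃ w : ℝ, w = (1 - v) / (1 + v) := ⟨_, rfl⟩
  obtain ⟨hw_l, hw_u⟩ := aux_w_bounds v hv_l hv_u
  rw [← hwdef] at hw_l hw_u
  have hw_pos : (0:ℝ) < w := by linarith
  have hvden : (0:ℝ) < 1 + v := by linarith
  -- arctan v + arctan w = π/4
  have hvw : v * w < 1 := aux_vw_lt1 v w hv_l hv_u hw_l hw_u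
  have hvw' : (0:ℝ) < 1 - v * w := by linarith
  have hsum : Real.arctan v + Real.arctan w = Real.pi / 4 := by
    rw [Real.arctan_add hvw]
    have heq : (v + w) / (1 - v * w) = 1 := by
      rw [div_eq_one_iff_eq hvw'.ne', hwdef]
      field_simp
      ring
    rw [heq, Real.arctan_one]
  obtain ⟨harct_l, harct_u⟩ := aux_arctan_w_bounds w hw_l hw_u
  -- finish
  have hfinal : Real.pi - b = Real.pi / 4 - Real.arctan w := by
    rw [hbval, h2θ]
    linarith
  have hπl := Real.pi_gt_d6
  have hπu := Real.pi_lt_d6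
  rw [hfinal]
  constructor
  · linarith
  · linarith
end

section
/- Let G be a finite simple graph such that every vertex has degree 6 and for every vertex v, the subgraph induced on the neighborhood of v is isomorphic to the cocktail party graph K_{3×2} (the complement of a perfect matching on 6 vertices, i.e. the octahedron graph). If G is connected, then G is isomorphic to the cocktail party graph K_{4×2} (the complement of a perfect matching on 8 vertices). -/
open SimpleGraph Finset

/-- The cocktail party graph `K_{n×2}`: complete multipartite with `n` parts of size 2. -/
def cocktailGraph (n : ℕ) : SimpleGraph (Σ _ : Fin n, Fin 2) :=
  SimpleGraph.completeMultipartiteGraph (fun _ : Fin n => Fin 2)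

lemma cocktail_adj {n : ℕ} (x y : Σ _ : Fin n, Fin 2) :
    (cocktailGraph n).Adj x y ↔ x.1 ≠ y.1 := Iff.rfl

instance cocktailDecAdj (n : ℕ) : DecidableRel (cocktailGraph n).Adj := fun x y =>
  inferInstanceAs (Decidable (x.1 ≠ y.1))

lemma cocktail3_degree : ∀ x : (Σ _ : Fin 3, Fin 2), (cocktailGraph 3).degree x = 4 := by decide

section aux

variable {V : Type*} [Fintype V] [DecidableEq V] (G : SimpleGraph V) [DecidableRel G.Adj]

lemma linkdeg
    (hloc : ∀ v : V, Nonempty ((G.induce (G.neighborSet v)) ≃g cocktailGraph 3))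
    (v u : V) (hu : G.Adj v u) :
    (G.neighborFinset u ∩ G.neighborFinset v).card = 4 := by
  obtain ⟨e⟩ := hloc v
  have hu' : u ∈ G.neighborSet v := hu
  have key : Fintype.card ((G.induce (G.neighborSet v)).neighborSet ⟨u, hu'⟩) = 4 := by
    rw [Fintype.card_congr (e.mapNeighborSet _), SimpleGraph.card_neighborSet_eq_degree]
    exact cocktail3_degree _
  have equ : ((G.induce (G.neighborSet v)).neighborSet ⟨u, hu'⟩) ≃
      {x : V // x ∈ G.neighborFinset u ∩ G.neighborFinset v} := by
    refine ⟨fun x => ⟨x.1.1, ?_⟩, fun x => ⟨⟨x.1, ?_⟩, ?_⟩, ?_, ?_⟩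
    · have hx := x.2
      simp only [SimpleGraph.mem_neighborSet, SimpleGraph.comap_adj] at hx
      simp only [Finset.mem_inter, SimpleGraph.mem_neighborFinset]
      exact ⟨hx, x.1.2⟩
    · have hx := x.2; simp only [Finset.mem_inter, SimpleGraph.mem_neighborFinset] at hx
      exact hx.2
    · have hx := x.2; simp only [Finset.mem_inter, SimpleGraph.mem_neighborFinset] at hx
      simpa [SimpleGraph.mem_neighborSet, SimpleGraph.comap_adj] using hx.1
    · intro x; rfl
    · intro x; rfl
  rw [Fintype.card_congr equ, Fintype.card_coe] at key
  exact key

/-- If `a, b` are distinct nonadjacent neighbors of `u`, any other neighbor `c` of `u`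
is adjacent to `a`. -/
lemma lemB (hdeg : ∀ v : V, G.degree v = 6)
    (hloc : ∀ v : V, Nonempty ((G.induce (G.neighborSet v)) ≃g cocktailGraph 3))
    {u a b c : V} (ha : G.Adj u a) (hb : G.Adj u b) (hab : a ≠ b) (hnadj : ¬ G.Adj a b)
    (hc : G.Adj u c) (hca : c ≠ a) (hcb : c ≠ b) : G.Adj a c := by
  have h4 : (G.neighborFinset a ∩ G.neighborFinset u).card = 4 := linkdeg G hloc u a ha
  have hsub : G.neighborFinset a ∩ G.neighborFinset u ⊆
      G.neighborFinset u \ {a, b} := by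
    intro x hx
    rw [Finset.mem_inter, SimpleGraph.mem_neighborFinset, SimpleGraph.mem_neighborFinset] at hx
    rw [Finset.mem_sdiff, SimpleGraph.mem_neighborFinset]
    refine ⟨hx.2, ?_⟩
    simp only [Finset.mem_insert, Finset.mem_singleton]
    rintro (rfl | rfl)
    · exact G.irrefl hx.1
    · exact hnadj hx.1
  have hpair : ({a, b} : Finset V) ⊆ G.neighborFinset u := by
    intro x hx
    simp only [Finset.mem_insert, Finset.mem_singleton] at hx
    rcases hx with rfl | rfl
    · exact (SimpleGraph.mem_neighborFinset _ _ _).2 ha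
    · exact (SimpleGraph.mem_neighborFinset _ _ _).2 hb
  have hcardsd : (G.neighborFinset u \ {a, b}).card = 4 := by
    rw [Finset.card_sdiff_of_subset hpair, Finset.card_pair hab]
    have := hdeg u
    rw [SimpleGraph.degree] at this
    omega
  have heq := Finset.eq_of_subset_of_card_le hsub (by omega)
  have hcmem : c ∈ G.neighborFinset u \ {a, b} := by
    rw [Finset.mem_sdiff, SimpleGraph.mem_neighborFinset]
    exact ⟨hc, by simp [hca, hcb]⟩
  rw [← heq, Finset.mem_inter, SimpleGraph.mem_neighborFinset] at hcmem
  exact hcmem.1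

end aux

theorem stmt_12 {V : Type*} [Fintype V] (G : SimpleGraph V) [DecidableRel G.Adj]
    (hdeg : ∀ v : V, G.degree v = 6)
    (hloc : ∀ v : V, Nonempty ((G.induce (G.neighborSet v)) ≃g cocktailGraph 3))
    (hconn : G.Connected) :
    Nonempty (G ≃g cocktailGraph 4) := by
  classical
  obtain ⟨v₀⟩ := hconn.nonempty
  set S := G.neighborFinset v₀ with hSdef
  have hS6 : S.card = 6 := hdeg v₀
  have hmemS : ∀ {u : V}, u ∈ S → G.Adj v₀ u := fun hu =>
    (SimpleGraph.mem_neighborFinset _ _ _).1 hu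
  have hmemS' : ∀ {u : V}, G.Adj v₀ u → u ∈ S := fun hu =>
    (SimpleGraph.mem_neighborFinset _ _ _).2 hu
  -- each u ∈ S has a unique neighbor outside {v₀} ∪ S
  have hExt : ∀ u ∈ S, ∃ w, G.neighborFinset u \ insert v₀ S = {w} := by
    intro u hu
    rw [← Finset.card_eq_one]
    have hv₀u : G.Adj v₀ u := hmemS hu
    have hinter : G.neighborFinset u ∩ insert v₀ S = insert v₀ (G.neighborFinset u ∩ S) := by
      ext x
      simp only [Finset.mem_inter, Finset.mem_insert]
      constructor
      · rintro ⟨hx, rfl | hx'⟩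
        · exact Or.inl rfl
        · exact Or.inr ⟨hx, hx'⟩
      · rintro (rfl | ⟨hx, hx'⟩)
        · exact ⟨(SimpleGraph.mem_neighborFinset _ _ _).2 hv₀u.symm, Or.inl rfl⟩
        · exact ⟨hx, Or.inr hx'⟩
    have h4 : (G.neighborFinset u ∩ S).card = 4 := linkdeg G hloc v₀ u hv₀u
    have hv₀nS : v₀ ∉ G.neighborFinset u ∩ S := by
      intro h
      exact G.irrefl (hmemS (Finset.mem_inter.1 h).2)
    have h5 : (G.neighborFinset u ∩ insert v₀ S).card = 5 := by
      rw [hinter, Finset.card_insert_of_notMem hv₀nS, h4]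
    have hsd := Finset.card_sdiff_add_card_inter (G.neighborFinset u) (insert v₀ S)
    have h6 : (G.neighborFinset u).card = 6 := hdeg u
    omega
  choose g hg using hExt
  have hgmem : ∀ u (hu : u ∈ S), g u hu ∈ G.neighborFinset u \ insert v₀ S := by
    intro u hu; rw [hg u hu]; exact Finset.mem_singleton_self _
  have hgadj : ∀ u (hu : u ∈ S), G.Adj u (g u hu) := by
    intro u hu
    exact (SimpleGraph.mem_neighborFinset _ _ _).1 (Finset.mem_sdiff.1 (hgmem u hu)).1
  have hgne : ∀ u (hu : u ∈ S), g u hu ≠ v₀ ∧ g u hu ∉ S := by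
    intro u hu
    have := (Finset.mem_sdiff.1 (hgmem u hu)).2
    simp only [Finset.mem_insert] at this
    push_neg at this
    exact this
  have hgeq : ∀ u (hu : u ∈ S) (x : V), G.Adj u x → x ≠ v₀ → x ∉ S → x = g u hu := by
    intro u hu x hx hxv hxS
    have hmem : x ∈ G.neighborFinset u \ insert v₀ S := by
      rw [Finset.mem_sdiff, SimpleGraph.mem_neighborFinset, Finset.mem_insert]
      exact ⟨hx, by tauto⟩
    rw [hg u hu, Finset.mem_singleton] at hmem
    exact hmem
  -- adjacent vertices of S share the same outer neighbor
  have hadjcase : ∀ u (hu : u ∈ S) u' (hu' : u' ∈ S), G.Adj u u' → g u hu = g u' hu' := by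
    intro u hu u' hu' huu'
    have hguadj := hgadj u hu
    obtain ⟨hgv, hgS⟩ := hgne u hu
    have hnadj : ¬ G.Adj (g u hu) v₀ := fun h => hgS (hmemS' h.symm)
    have hadj' : G.Adj (g u hu) u' := by
      refine lemB G hdeg hloc hguadj (hmemS hu).symm hgv hnadj huu' ?_ ?_
      · intro h; exact hgS (h ▸ hu')
      · exact (hmemS hu').ne'
    exact hgeq u' hu' (g u hu) hadj'.symm hgv hgS
  -- the outer neighbor is the same for all of S
  have hconst : ∀ u (hu : u ∈ S) u' (hu' : u' ∈ S), g u hu = g u' hu' := by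
    intro u hu u' hu'
    by_cases hequ : u = u'
    · subst hequ; rfl
    by_cases hadj : G.Adj u u'
    · exact hadjcase u hu u' hu' hadj
    · have hne : (S \ {u, u'}).Nonempty := by
        rw [← Finset.card_pos]
        have h1 := Finset.card_sdiff_add_card_inter S ({u, u'} : Finset V)
        have h2 : (S ∩ {u, u'}).card ≤ 2 := by
          refine le_trans (Finset.card_le_card Finset.inter_subset_right) ?_
          rw [Finset.card_pair hequ]
        omega
      obtain ⟨c, hc⟩ := hne
      rw [Finset.mem_sdiff] at hc
      obtain ⟨hcS, hcne⟩ := hc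
      simp only [Finset.mem_insert, Finset.mem_singleton] at hcne
      push_neg at hcne
      have hadjuc : G.Adj u c :=
        lemB G hdeg hloc (hmemS hu) (hmemS hu') hequ hadj (hmemS hcS) hcne.1 hcne.2
      have hadju'c : G.Adj u' c :=
        lemB G hdeg hloc (hmemS hu') (hmemS hu) (Ne.symm hequ) (fun h => hadj h.symm)
          (hmemS hcS) hcne.2 hcne.1
      rw [hadjcase u hu c hcS hadjuc, hadjcase u' hu' c hcS hadju'c]
  -- the antipode w₀ of v₀
  have hSne : S.Nonempty := by rw [← Finset.card_pos]; omega
  obtain ⟨u₁, hu₁⟩ := hSne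
  set w₀ := g u₁ hu₁ with hw₀def
  have hw₀adj : ∀ u ∈ S, G.Adj u w₀ := by
    intro u hu
    rw [hw₀def, ← hconst u hu u₁ hu₁]
    exact hgadj u hu
  have hw₀v : w₀ ≠ v₀ := (hgne u₁ hu₁).1
  have hw₀S : w₀ ∉ S := (hgne u₁ hu₁).2
  have hNw₀ : G.neighborFinset w₀ = S := by
    refine (Finset.eq_of_subset_of_card_le ?_ ?_).symm
    · intro x hx
      exact (SimpleGraph.mem_neighborFinset _ _ _).2 (hw₀adj x hx).symm
    · have hd := hdeg w₀
      rw [SimpleGraph.degree] at hd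
      omega
  -- the vertex set
  set T : Finset V := insert v₀ (insert w₀ S) with hTdef
  have hv₀T : v₀ ∉ insert w₀ S := by
    simp only [Finset.mem_insert]
    push_neg
    exact ⟨Ne.symm hw₀v, fun h => G.irrefl (hmemS h)⟩
  have hclosed : ∀ x ∈ T, ∀ y, G.Adj x y → y ∈ T := by
    intro x hx y hxy
    simp only [hTdef, Finset.mem_insert] at hx ⊢
    rcases hx with rfl | rfl | hxS
    · exact Or.inr (Or.inr (hmemS' hxy))
    · have : y ∈ S := hNw₀ ▸ (SimpleGraph.mem_neighborFinset _ _ _).2 hxy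
      exact Or.inr (Or.inr this)
    · -- x ∈ S : N(x) = {v₀, w₀} ∪ (N(x) ∩ S)
      have hNx : G.neighborFinset x = insert v₀ (insert w₀ (G.neighborFinset x ∩ S)) := by
        refine (Finset.eq_of_subset_of_card_le ?_ ?_).symm
        · intro z hz
          simp only [Finset.mem_insert, Finset.mem_inter] at hz
          rcases hz with rfl | rfl | ⟨hz1, _⟩
          · exact (SimpleGraph.mem_neighborFinset _ _ _).2 (hmemS hxS).symm
          · exact (SimpleGraph.mem_neighborFinset _ _ _).2 (hw₀adj x hxS)
          · exact hz1
        · have hw₀ni : w₀ ∉ G.neighborFinset x ∩ S := by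
            intro h; exact hw₀S (Finset.mem_inter.1 h).2
          have hv₀ni : v₀ ∉ insert w₀ (G.neighborFinset x ∩ S) := by
            simp only [Finset.mem_insert, Finset.mem_inter]
            push_neg
            exact ⟨Ne.symm hw₀v, fun _ h => G.irrefl (hmemS h)⟩
          rw [Finset.card_insert_of_notMem hv₀ni, Finset.card_insert_of_notMem hw₀ni,
            linkdeg G hloc v₀ x (hmemS hxS)]
          have hd := hdeg x
          rw [SimpleGraph.degree] at hd
          omega
      have hy : y ∈ G.neighborFinset x := (SimpleGraph.mem_neighborFinset _ _ _).2 hxy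
      rw [hNx] at hy
      simp only [Finset.mem_insert, Finset.mem_inter] at hy
      rcases hy with rfl | rfl | ⟨_, h2⟩
      · exact Or.inl rfl
      · exact Or.inr (Or.inl rfl)
      · exact Or.inr (Or.inr h2)
  have hwalk : ∀ (a x : V) (p : G.Walk a x), a ∈ T → x ∈ T := by
    intro a x p
    induction p with
    | nil => exact id
    | cons h p ih => intro ha; exact ih (hclosed _ ha _ h)
  have huniv : ∀ x : V, x ∈ T := by
    intro x
    obtain ⟨p⟩ := hconn.preconnected v₀ x
    exact hwalk v₀ x p (Finset.mem_insert_self _ _)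
  have hTuniv : T = Finset.univ := Finset.eq_univ_iff_forall.2 huniv
  have hcardV : Fintype.card V = 8 := by
    rw [← Finset.card_univ, ← hTuniv, hTdef, Finset.card_insert_of_notMem hv₀T,
      Finset.card_insert_of_notMem hw₀S, hS6]
  -- construct the isomorphism
  obtain ⟨e⟩ := hloc v₀
  set f : (Σ _ : Fin 4, Fin 2) → V := fun x =>
    if h : (x.1 : ℕ) < 3 then ((e.symm ⟨⟨x.1, h⟩, x.2⟩ : G.neighborSet v₀) : V)
    else if x.2 = 0 then v₀ else w₀ with hfdef
  have hfS : ∀ (a : Σ _ : Fin 3, Fin 2), ((e.symm a : G.neighborSet v₀) : V) ∈ S :=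
    fun a => (SimpleGraph.mem_neighborFinset _ _ _).2 (e.symm a).2
  have hSS : ∀ (a b : Σ _ : Fin 3, Fin 2),
      G.Adj ((e.symm a : G.neighborSet v₀) : V) ((e.symm b : G.neighborSet v₀) : V) ↔
        a.1 ≠ b.1 := by
    intro a b
    have h1 : (G.induce (G.neighborSet v₀)).Adj (e.symm a) (e.symm b) ↔
        (cocktailGraph 3).Adj a b := e.symm.map_adj_iff
    have h2 : (G.induce (G.neighborSet v₀)).Adj (e.symm a) (e.symm b) ↔
        G.Adj ((e.symm a : G.neighborSet v₀) : V) ((e.symm b : G.neighborSet v₀) : V) := by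
      simp [SimpleGraph.comap_adj]
    rw [← h2, h1, cocktail_adj]
  have fin2one : ∀ j : Fin 2, j ≠ 0 → j = 1 := by decide
  have hinj : Function.Injective f := by
    rintro ⟨i, j⟩ ⟨i', j'⟩ hxy
    simp only [hfdef] at hxy
    by_cases h : (i : ℕ) < 3 <;> by_cases h' : (i' : ℕ) < 3
    · rw [dif_pos h, dif_pos h'] at hxy
      have h2 := e.symm.injective (Subtype.ext hxy)
      have hval : (i : ℕ) = (i' : ℕ) := congrArg (fun t => ((t.1 : Fin 3) : ℕ)) h2
      have hj : j = j' := congrArg (fun t => (t.2 : Fin 2)) h2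
      exact Sigma.ext (Fin.ext hval) (heq_of_eq hj)
    · exfalso
      rw [dif_pos h, dif_neg h'] at hxy
      have hmem := hfS ⟨⟨i, h⟩, j⟩
      rw [hxy] at hmem
      by_cases hj : j' = 0
      · rw [if_pos hj] at hmem; exact G.irrefl (hmemS hmem)
      · rw [if_neg hj] at hmem; exact hw₀S hmem
    · exfalso
      rw [dif_neg h, dif_pos h'] at hxy
      have hmem := hfS ⟨⟨i', h'⟩, j'⟩
      rw [← hxy] at hmem
      by_cases hj : j = 0
      · rw [if_pos hj] at hmem; exact G.irrefl (hmemS hmem)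
      · rw [if_neg hj] at hmem; exact hw₀S hmem
    · rw [dif_neg h, dif_neg h'] at hxy
      have hi : i = i' := by
        have h4 := i.isLt
        have h4' := i'.isLt
        exact Fin.ext (by omega)
      have hj : j = j' := by
        by_cases hj0 : j = 0 <;> by_cases hj0' : j' = 0
        · rw [hj0, hj0']
        · rw [if_pos hj0, if_neg hj0'] at hxy
          exact absurd hxy.symm hw₀v
        · rw [if_neg hj0, if_pos hj0'] at hxy
          exact absurd hxy hw₀v
        · rw [fin2one j hj0, fin2one j' hj0']
      rw [hi, hj]
  have hbij : Function.Bijective f := by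
    rw [Fintype.bijective_iff_injective_and_card]
    refine ⟨hinj, ?_⟩
    rw [hcardV]
    decide
  have hadjmix : ∀ (a : Σ _ : Fin 3, Fin 2) (x : V), x = v₀ ∨ x = w₀ →
      G.Adj ((e.symm a : G.neighborSet v₀) : V) x := by
    rintro a x (rfl | rfl)
    · exact (hmemS (hfS a)).symm
    · exact hw₀adj _ (hfS a)
  refine ⟨(RelIso.mk (Equiv.ofBijective f hbij) ?_).symm⟩
  rintro ⟨i, j⟩ ⟨i', j'⟩
  show G.Adj (f ⟨i, j⟩) (f ⟨i', j'⟩) ↔ (cocktailGraph 4).Adj ⟨i, j⟩ ⟨i', j'⟩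
  rw [cocktail_adj]
  show G.Adj (f ⟨i, j⟩) (f ⟨i', j'⟩) ↔ i ≠ i'
  simp only [hfdef]
  by_cases h : (i : ℕ) < 3 <;> by_cases h' : (i' : ℕ) < 3
  · rw [dif_pos h, dif_pos h', hSS]
    show (⟨i, h⟩ : Fin 3) ≠ ⟨i', h'⟩ ↔ i ≠ i'
    constructor
    · intro hne hne'
      subst hne'
      exact hne rfl
    · intro hne hne'
      have hv : (i : ℕ) = (i' : ℕ) := congrArg (fun t : Fin 3 => t.val) hne'
      exact hne (Fin.ext hv)
  · rw [dif_pos h, dif_neg h']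
    constructor
    · exact fun _ hne => absurd (congrArg Fin.val hne) (by omega)
    · intro _
      by_cases hj : j' = 0
      · rw [if_pos hj]; exact hadjmix ⟨⟨i, h⟩, j⟩ _ (Or.inl rfl)
      · rw [if_neg hj]; exact hadjmix ⟨⟨i, h⟩, j⟩ _ (Or.inr rfl)
  · rw [dif_neg h, dif_pos h']
    constructor
    · exact fun _ hne => absurd (congrArg Fin.val hne) (by omega)
    · intro _
      by_cases hj : j = 0
      · rw [if_pos hj]; exact (hadjmix ⟨⟨i', h'⟩, j'⟩ _ (Or.inl rfl)).symm
      · rw [if_neg hj]; exact (hadjmix ⟨⟨i', h'⟩, j'⟩ _ (Or.inr rfl)).symm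
  · rw [dif_neg h, dif_neg h']
    have h4 := i.isLt
    have h4' := i'.isLt
    constructor
    · intro hadj
      exfalso
      by_cases hj : j = 0 <;> by_cases hj' : j' = 0
      · rw [if_pos hj, if_pos hj'] at hadj; exact G.irrefl hadj
      · rw [if_pos hj, if_neg hj'] at hadj; exact hw₀S (hmemS' hadj)
      · rw [if_neg hj, if_pos hj'] at hadj; exact hw₀S (hmemS' hadj.symm)
      · rw [if_neg hj, if_neg hj'] at hadj; exact G.irrefl hadj
    · intro hne
      exact absurd (Fin.ext (by omega : (i : ℕ) = (i' : ℕ))) hne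
end
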